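/- arXiv:1902.04234 — 2 statements merged into one kernel-verified Lean document; each statement's English description precedes it below -/
import Mathlib

section
/- For complex numbers a, b, c with c not a nonpositive integer and Re(c - a - b) > 0, the Gauss hypergeometric series ∑_{m=0}^∞ (a)_m (b)_m / ((c)_m m!) converges and equals Γ(c)Γ(c-a-b)/(Γ(c-a)Γ(c-b)). -/
/-!
Writing `F(c)` for `₂F₁(a, b; c; 1)`, the coefficients satisfy a contiguous relation which,
after telescoping, gives `c (c - a - b) F(c) = (c - a) (c - b) F(c + 1)`. Iterating,
`F(c) = (c - a)ₙ (c - b)ₙ / ((c)ₙ (c - a - b)ₙ) · F(c + n)`. As `n → ∞`, `F(c + n) → 1` by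
dominated convergence, and Gauss's product `(s)ₙ₊₁ = n ^ s n! / GammaSeq s n` turns the
Pochhammer ratio into `Γ(c) Γ(c - a - b) / (Γ(c - a) Γ(c - b))`. The same product formula
gives `‖(a)ₙ (b)ₙ / ((c)ₙ n!)‖ = O(n ^ (Re (a + b - c) - 1))`, hence convergence.
-/

open Filter Topology Finset Nat Asymptotics

theorem ascPochhammer_eval_eq_prod_range {R : Type*} [CommSemiring R] (n : ℕ) (r : R) :
    (ascPochhammer R n).eval r = ∏ j ∈ range n, (r + j) := by
  induction n with
  | zero => simp
  | succ n ih => rw [ascPochhammer_succ_eval, ih, prod_range_succ]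

theorem ascPochhammer_eval_add_one_mul {R : Type*} [CommSemiring R] (c : R) (m : ℕ) :
    c * (ascPochhammer R m).eval (c + 1) = (ascPochhammer R m).eval c * (c + m) := by
  rw [← ascPochhammer_succ_eval, ascPochhammer_succ_left]
  simp [Polynomial.eval_comp]

theorem tsum_sub_add_one_eq_of_tendsto {G : Type*} [AddCommGroup G] [TopologicalSpace G]
    [IsTopologicalAddGroup G] [T2Space G] {f : ℕ → G} {l : G}
    (hsum : Summable fun n ↦ f n - f (n + 1)) (hf : Tendsto f atTop (𝓝 l)) :
    ∑' n, (f n - f (n + 1)) = f 0 - l := by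
  refine tendsto_nhds_unique hsum.hasSum.tendsto_sum_nat ?_
  simpa only [sum_range_sub'] using tendsto_const_nhds.sub hf

namespace Complex

theorem ne_neg_natCast_of_re_pos {z : ℂ} (hz : 0 < z.re) (k : ℕ) : z ≠ -k := by
  rintro rfl
  simp only [neg_re, natCast_re] at hz
  linarith [k.cast_nonneg (α := ℝ)]

theorem ascPochhammer_eval_ne_zero {z : ℂ} (hz : ∀ k : ℕ, z ≠ -k) (m : ℕ) :
    (ascPochhammer ℂ m).eval z ≠ 0 := by
  rw [Ne, ascPochhammer_eval_eq_zero_iff]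
  rintro ⟨k, -, hk⟩
  exact hz k (by rw [hk, neg_neg])

theorem norm_le_norm_of_re_le {z w : ℂ} (hz : 0 ≤ z.re) (hre : z.re ≤ w.re)
    (him : z.im = w.im) : ‖z‖ ≤ ‖w‖ := by
  rw [← sq_le_sq₀ (norm_nonneg z) (norm_nonneg w), ← normSq_eq_norm_sq, ← normSq_eq_norm_sq,
    normSq_apply, normSq_apply, him]
  nlinarith

theorem norm_ascPochhammer_eval_le {z w : ℂ} (hz : 0 ≤ z.re) (hre : z.re ≤ w.re)
    (him : z.im = w.im) (m : ℕ) :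
    ‖(ascPochhammer ℂ m).eval z‖ ≤ ‖(ascPochhammer ℂ m).eval w‖ := by
  simp only [ascPochhammer_eval_eq_prod_range, norm_prod]
  refine prod_le_prod (fun _ _ ↦ norm_nonneg _) fun j _ ↦ norm_le_norm_of_re_le ?_ ?_ ?_ <;>
    simp [hz, hre, him, add_nonneg]

theorem tendsto_inv_ascPochhammer_eval_add_nat (c : ℂ) {m : ℕ} (hm : m ≠ 0) :
    Tendsto (fun n : ℕ ↦ ((ascPochhammer ℂ m).eval (c + n))⁻¹) atTop (𝓝 0) := by
  have hdeg : 0 < (ascPochhammer ℂ m).degree := by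
    rw [Polynomial.degree_eq_natDegree (monic_ascPochhammer ℂ m).ne_zero, ascPochhammer_natDegree]
    exact_mod_cast Nat.pos_of_ne_zero hm
  have hcn : Tendsto (fun n : ℕ ↦ ‖c + n‖) atTop atTop := by
    refine tendsto_atTop_mono (fun n ↦ ?_)
      (tendsto_natCast_atTop_atTop.atTop_add (tendsto_const_nhds (x := -‖c‖)))
    have := norm_sub_le (c + n) c
    simp only [add_sub_cancel_left, norm_natCast] at this
    linarith
  rw [tendsto_zero_iff_norm_tendsto_zero]
  simpa only [norm_inv, Function.comp_def] using
    tendsto_inv_atTop_zero.comp (Polynomial.tendsto_norm_atTop _ hdeg hcn)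

-- No hypothesis on `s`: if the product `∏ j < n + 1, (s + j)` vanishes, so does `GammaSeq s n`.
theorem ascPochhammer_eval_succ_eq_div_GammaSeq (s : ℂ) {n : ℕ} (hn : n ≠ 0) :
    (ascPochhammer ℂ (n + 1)).eval s = n ^ s * n ! / GammaSeq s n := by
  have : (n : ℂ) ^ s * n ! ≠ 0 := by simp [hn, Nat.factorial_ne_zero]
  rw [GammaSeq, ascPochhammer_eval_eq_prod_range, div_div_cancel₀ this]

-- At a pole `s = -m` both sides are `0`: `GammaSeq s n = 0` for `n ≥ m`, and `Γ s = 0`.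
theorem tendsto_GammaSeq_inv (s : ℂ) :
    Tendsto (fun n ↦ (GammaSeq s n)⁻¹) atTop (𝓝 (Gamma s)⁻¹) := by
  by_cases hs : ∀ m : ℕ, s ≠ -m
  · exact (GammaSeq_tendsto_Gamma s).inv₀ (Gamma_ne_zero hs)
  push Not at hs
  obtain ⟨m, rfl⟩ := hs
  rw [Gamma_neg_nat_eq_zero, inv_zero]
  refine tendsto_const_nhds.congr' ?_
  filter_upwards [eventually_ge_atTop m] with n hn
  rw [GammaSeq, prod_eq_zero (mem_range.2 (Nat.lt_succ_of_le hn)) (by simp), div_zero, inv_zero]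

theorem ascPochhammer_eval_ratio_eq (x y z w : ℂ) {n : ℕ} (hn : n ≠ 0) :
    (ascPochhammer ℂ (n + 1)).eval x * (ascPochhammer ℂ (n + 1)).eval y /
        ((ascPochhammer ℂ (n + 1)).eval z * (ascPochhammer ℂ (n + 1)).eval w) =
      n ^ (x + y - z - w) * (GammaSeq z n * GammaSeq w n / (GammaSeq x n * GammaSeq y n)) := by
  have hn' : (n : ℂ) ≠ 0 := by exact_mod_cast hn
  have hf : (n ! : ℂ) ≠ 0 := by exact_mod_cast n.factorial_ne_zero
  simp only [ascPochhammer_eval_succ_eq_div_GammaSeq _ hn, cpow_sub _ _ hn', cpow_add _ _ hn']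
  field_simp

theorem tendsto_GammaSeq_ratio (x y z w : ℂ) :
    Tendsto (fun n ↦ GammaSeq z n * GammaSeq w n / (GammaSeq x n * GammaSeq y n)) atTop
      (𝓝 (Gamma z * Gamma w / (Gamma x * Gamma y))) := by
  simp only [div_eq_mul_inv, mul_inv]
  exact ((GammaSeq_tendsto_Gamma z).mul (GammaSeq_tendsto_Gamma w)).mul
    ((tendsto_GammaSeq_inv x).mul (tendsto_GammaSeq_inv y))

theorem tendsto_ascPochhammer_eval_ratio {x y z w : ℂ} (h : x + y = z + w) :
    Tendsto (fun n ↦ (ascPochhammer ℂ n).eval x * (ascPochhammer ℂ n).eval y /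
        ((ascPochhammer ℂ n).eval z * (ascPochhammer ℂ n).eval w)) atTop
      (𝓝 (Gamma z * Gamma w / (Gamma x * Gamma y))) := by
  rw [← tendsto_add_atTop_iff_nat 1]
  refine (tendsto_GammaSeq_ratio x y z w).congr' ?_
  filter_upwards [eventually_ne_atTop 0] with n hn
  rw [ascPochhammer_eval_ratio_eq _ _ _ _ hn, show x + y - z - w = 0 by linear_combination h,
    cpow_zero, one_mul]

end Complex

open Complex

theorem ordinaryHypergeometric_one_eq_tsum (a b c : ℂ) :
    ₂F₁ a b c (1 : ℂ) = ∑' n, ordinaryHypergeometricCoefficient a b c n := by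
  simp [ordinaryHypergeometric_eq_tsum]

theorem ordinaryHypergeometricCoefficient_eq_div (a b c : ℂ) (m : ℕ) :
    ordinaryHypergeometricCoefficient a b c m =
      (ascPochhammer ℂ m).eval a * (ascPochhammer ℂ m).eval b /
        ((ascPochhammer ℂ m).eval c * m !) := by
  ring

theorem ordinaryHypergeometricCoefficient_succ_eq (a b c : ℂ) {n : ℕ} (hn : n ≠ 0) :
    ordinaryHypergeometricCoefficient a b c (n + 1) =
      n ^ (a + b - c - 1) * (GammaSeq c n * GammaSeq 1 n / (GammaSeq a n * GammaSeq b n)) := by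
  rw [ordinaryHypergeometricCoefficient_eq_div, ← ascPochhammer_eval_one,
    ascPochhammer_eval_ratio_eq _ _ _ _ hn]

theorem isBigO_ordinaryHypergeometricCoefficient_succ (a b c : ℂ) :
    (fun n : ℕ ↦ ordinaryHypergeometricCoefficient a b c (n + 1)) =O[atTop]
      fun n : ℕ ↦ (n : ℝ) ^ ((a + b - c).re - 1) := by
  have hpow : (fun n : ℕ ↦ (n : ℂ) ^ (a + b - c - 1)) =O[atTop]
      fun n : ℕ ↦ (n : ℝ) ^ ((a + b - c).re - 1) := by
    refine IsBigO.of_bound 1 ?_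
    filter_upwards [eventually_ne_atTop 0] with n hn
    rw [norm_natCast_cpow_of_pos (Nat.pos_of_ne_zero hn), one_mul,
      Real.norm_of_nonneg (by positivity)]
    simp
  refine (hpow.mul ((tendsto_GammaSeq_ratio a b c 1).isBigO_one ℝ)).congr' ?_ (by simp)
  filter_upwards [eventually_ne_atTop 0] with n hn
  exact (ordinaryHypergeometricCoefficient_succ_eq a b c hn).symm

theorem summable_norm_ordinaryHypergeometricCoefficient {a b c : ℂ} (h : 0 < (c - a - b).re) :
    Summable fun n ↦ ‖ordinaryHypergeometricCoefficient a b c n‖ := by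
  refine (summable_nat_add_iff 1).1 <| summable_of_isBigO_nat (Real.summable_nat_rpow.2 ?_)
    (isBigO_ordinaryHypergeometricCoefficient_succ a b c).norm_left
  simp only [sub_re, add_re] at h ⊢
  linarith

theorem tendsto_natCast_mul_ordinaryHypergeometricCoefficient {a b c : ℂ}
    (h : 0 < (c - a - b).re) :
    Tendsto (fun n : ℕ ↦ (n : ℂ) * ordinaryHypergeometricCoefficient a b c n) atTop (𝓝 0) := by
  have hρ : (a + b - c).re < 0 := by simp only [sub_re, add_re] at h ⊢; linarith
  have hlin : (fun n : ℕ ↦ ((n + 1 : ℕ) : ℂ)) =O[atTop] fun n : ℕ ↦ (n : ℝ) := by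
    refine IsBigO.of_bound 2 ?_
    filter_upwards [eventually_ge_atTop 1] with n hn
    have : (1 : ℝ) ≤ n := by exact_mod_cast hn
    rw [Complex.norm_natCast, Real.norm_natCast]
    push_cast
    linarith
  have hrpow : Tendsto (fun n : ℕ ↦ (n : ℝ) ^ (a + b - c).re) atTop (𝓝 0) := by
    simpa [Function.comp_def] using
      (tendsto_rpow_neg_atTop (neg_pos.2 hρ)).comp tendsto_natCast_atTop_atTop
  rw [← tendsto_add_atTop_iff_nat 1]
  refine ((hlin.mul (isBigO_ordinaryHypergeometricCoefficient_succ a b c)).congr' (by simp)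
    ?_).trans_tendsto hrpow
  filter_upwards [eventually_ne_atTop 0] with n hn
  rw [Real.rpow_sub_one (by exact_mod_cast hn)]
  field_simp

theorem ordinaryHypergeometricCoefficient_add_one_mul (a b : ℂ) {c : ℂ} (hc : ∀ k : ℕ, c ≠ -k)
    (m : ℕ) :
    ordinaryHypergeometricCoefficient a b (c + 1) m * (c + m) =
      c * ordinaryHypergeometricCoefficient a b c m := by
  have hc0 : c ≠ 0 := by simpa using hc 0
  have hcm : c + m ≠ 0 := fun h ↦ hc m (eq_neg_of_add_eq_zero_left h)
  have hP1 : (ascPochhammer ℂ m).eval (c + 1) = (ascPochhammer ℂ m).eval c * (c + m) / c := by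
    rw [eq_div_iff hc0, mul_comm, ascPochhammer_eval_add_one_mul]
  simp only [ordinaryHypergeometricCoefficient, hP1]
  field_simp

theorem ordinaryHypergeometricCoefficient_succ_mul (a b : ℂ) {c : ℂ} {m : ℕ} (hcm : c + m ≠ 0) :
    ordinaryHypergeometricCoefficient a b c (m + 1) * ((c + m) * (m + 1)) =
      ordinaryHypergeometricCoefficient a b c m * ((a + m) * (b + m)) := by
  simp only [ordinaryHypergeometricCoefficient, ascPochhammer_succ_eval, factorial_succ]
  push_cast
  field_simp

theorem ordinaryHypergeometric_one_contiguous {a b c : ℂ} (hc : ∀ k : ℕ, c ≠ -k)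
    (h : 0 < (c - a - b).re) :
    c * (c - a - b) * ₂F₁ a b c (1 : ℂ) = (c - a) * (c - b) * ₂F₁ a b (c + 1) (1 : ℂ) := by
  set A : ℕ → ℂ := fun m ↦ c * (m * ordinaryHypergeometricCoefficient a b c m)
  have hA : Tendsto A atTop (𝓝 0) := by
    simpa using (tendsto_natCast_mul_ordinaryHypergeometricCoefficient h).const_mul c
  have htel : ∀ m : ℕ, c * (c - a - b) * ordinaryHypergeometricCoefficient a b c m -
      (c - a) * (c - b) * ordinaryHypergeometricCoefficient a b (c + 1) m = A m - A (m + 1) := by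
    intro m
    have hcm : c + m ≠ 0 := fun h ↦ hc m (eq_neg_of_add_eq_zero_left h)
    refine mul_right_cancel₀ hcm ?_
    have r1 := ordinaryHypergeometricCoefficient_add_one_mul a b hc m
    have r2 := ordinaryHypergeometricCoefficient_succ_mul a b hcm
    simp only [A]
    push_cast
    linear_combination (-(c - a) * (c - b)) * r1 + c * r2
  have h1 : 0 < (c + 1 - a - b).re := by simp only [sub_re, add_re, one_re] at h ⊢; linarith
  have hS := ((summable_norm_ordinaryHypergeometricCoefficient h).of_norm.mul_left
    (c * (c - a - b)))
  have hS1 := ((summable_norm_ordinaryHypergeometricCoefficient h1).of_norm.mul_left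
    ((c - a) * (c - b)))
  rw [← sub_eq_zero, ordinaryHypergeometric_one_eq_tsum, ordinaryHypergeometric_one_eq_tsum,
    ← tsum_mul_left, ← tsum_mul_left, ← hS.tsum_sub hS1]
  have hsum := hS.sub hS1
  simp_rw [htel] at hsum ⊢
  rw [tsum_sub_add_one_eq_of_tendsto hsum hA]
  simp [A]

theorem ascPochhammer_mul_ordinaryHypergeometric_one {a b c : ℂ} (hc : ∀ k : ℕ, c ≠ -k)
    (h : 0 < (c - a - b).re) (n : ℕ) :
    (ascPochhammer ℂ n).eval c * (ascPochhammer ℂ n).eval (c - a - b) * ₂F₁ a b c (1 : ℂ) =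
      (ascPochhammer ℂ n).eval (c - a) * (ascPochhammer ℂ n).eval (c - b) *
        ₂F₁ a b (c + n) (1 : ℂ) := by
  induction n with
  | zero => simp
  | succ n ih =>
    have hcn : ∀ k : ℕ, c + n ≠ -k := fun k hk ↦ hc (k + n) (by push_cast; linear_combination hk)
    have hn : 0 < (c + n - a - b).re := by
      simp only [sub_re, add_re, natCast_re] at h ⊢
      linarith [n.cast_nonneg (α := ℝ)]
    have step := ordinaryHypergeometric_one_contiguous hcn hn
    simp only [ascPochhammer_succ_eval]
    push_cast
    rw [← add_assoc]
    linear_combination (c + n) * (c - a - b + n) * ih +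
      (ascPochhammer ℂ n).eval (c - a) * (ascPochhammer ℂ n).eval (c - b) * step

theorem tendsto_ordinaryHypergeometricCoefficient_add_nat (a b c : ℂ) (m : ℕ) :
    Tendsto (fun n : ℕ ↦ ordinaryHypergeometricCoefficient a b (c + n) m) atTop
      (𝓝 ((Pi.single 0 1 : ℕ → ℂ) m)) := by
  rcases eq_or_ne m 0 with rfl | hm
  · simp [ordinaryHypergeometricCoefficient]
  · rw [Pi.single_eq_of_ne hm]
    simpa using (tendsto_inv_ascPochhammer_eval_add_nat c hm).const_mul
      ((m ! : ℂ)⁻¹ * (ascPochhammer ℂ m).eval a * (ascPochhammer ℂ m).eval b)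

theorem tendsto_ordinaryHypergeometric_one_add_nat (a b c : ℂ) :
    Tendsto (fun n : ℕ ↦ ₂F₁ a b (c + n) (1 : ℂ)) atTop (𝓝 1) := by
  obtain ⟨N, hN⟩ : ∃ N : ℕ, 0 < (c + N).re ∧ 0 < (c + N - a - b).re := by
    obtain ⟨N, hN⟩ := exists_nat_gt (max (-c.re) (a.re + b.re - c.re))
    refine ⟨N, ?_, ?_⟩ <;> simp only [sub_re, add_re, natCast_re] <;> grind
  have hbound : ∀ᶠ n : ℕ in atTop, ∀ m, ‖ordinaryHypergeometricCoefficient a b (c + n) m‖ ≤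
      ‖ordinaryHypergeometricCoefficient a b (c + N) m‖ := by
    filter_upwards [eventually_ge_atTop N] with n hn m
    have hP := ascPochhammer_eval_ne_zero (ne_neg_natCast_of_re_pos hN.1) m
    have hle : ‖(ascPochhammer ℂ m).eval (c + N)‖ ≤ ‖(ascPochhammer ℂ m).eval (c + n)‖ :=
      norm_ascPochhammer_eval_le hN.1.le (by simpa using hn) (by simp) m
    simp only [ordinaryHypergeometricCoefficient, norm_mul, norm_inv]
    gcongr
  simp_rw [ordinaryHypergeometric_one_eq_tsum]
  simpa using tendsto_tsum_of_dominated_convergence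
    (summable_norm_ordinaryHypergeometricCoefficient hN.2)
    (tendsto_ordinaryHypergeometricCoefficient_add_nat a b c) hbound

/-- Gauss summation theorem: the Gauss hypergeometric series at `x = 1`
converges and sums to `Γ(c)Γ(c-a-b)/(Γ(c-a)Γ(c-b))`. -/
theorem gauss_summation (a b c : ℂ) (hc : ∀ k : ℕ, c ≠ -(k : ℂ))
    (h : 0 < (c - a - b).re) :
    HasSum
      (fun m : ℕ =>
        (ascPochhammer ℂ m).eval a * (ascPochhammer ℂ m).eval b /
          ((ascPochhammer ℂ m).eval c * (m.factorial : ℂ)))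
      (Complex.Gamma c * Complex.Gamma (c - a - b) /
        (Complex.Gamma (c - a) * Complex.Gamma (c - b))) := by
  have hshift : ∀ n : ℕ, ₂F₁ a b c (1 : ℂ) =
      (ascPochhammer ℂ n).eval (c - a) * (ascPochhammer ℂ n).eval (c - b) /
        ((ascPochhammer ℂ n).eval c * (ascPochhammer ℂ n).eval (c - a - b)) *
        ₂F₁ a b (c + n) (1 : ℂ) := fun n ↦ by
    rw [div_mul_eq_mul_div, eq_div_iff (mul_ne_zero (ascPochhammer_eval_ne_zero hc n)
      (ascPochhammer_eval_ne_zero (ne_neg_natCast_of_re_pos h) n)), mul_comm,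
      ascPochhammer_mul_ordinaryHypergeometric_one hc h]
  have hlim := (tendsto_ascPochhammer_eval_ratio (by ring : c - a + (c - b) = c + (c - a - b))).mul
    (tendsto_ordinaryHypergeometric_one_add_nat a b c)
  have hF := tendsto_nhds_unique (tendsto_const_nhds.congr hshift) hlim
  rw [mul_one] at hF
  simp_rw [← ordinaryHypergeometricCoefficient_eq_div, ← hF, ordinaryHypergeometric_one_eq_tsum]
  exact (summable_norm_ordinaryHypergeometricCoefficient h).of_norm.hasSum
end

section
/- The contiguous relation for the Lauricella function F_A: ∑_{j=1}^n (a_j/b_j) x_j F_A^{(n)}(a+1; a_1,...,a_j+1,...,a_n; b_1,...,b_j+1,...,b_n; x) = F_A^{(n)}(a+1; a_1,...,a_n; b_1,...,b_n; x) − F_A^{(n)}(a; a_1,...,a_n; b_1,...,b_n; x), for |x_1|+...+|x_n| < 1. -/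
open Finset

/-- The Lauricella hypergeometric function `F_A^{(n)}` of `n` variables. -/
noncomputable def lauricellaFA (n : ℕ) (a : ℝ) (b c : Fin n → ℝ)
    (z : Fin n → ℝ) : ℝ :=
  ∑' m : Fin n → ℕ,
    (ascPochhammer ℝ (∑ k, m k)).eval a *
      ∏ k, (ascPochhammer ℝ (m k)).eval (b k) * (z k) ^ (m k) /
        ((ascPochhammer ℝ (m k)).eval (c k) * ((m k).factorial : ℝ))

/-!
Termwise, with `M = m₁ + ⋯ + mₙ`, one has `(a + 1)_M - (a)_M = M (a + 1)_{M-1}`. Splitting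
`M = ∑ⱼ mⱼ` and shifting `m ↦ m + eⱼ` in the `j`-th piece turns it into `(aⱼ / bⱼ) xⱼ` times the
`j`-th series on the left, because `(ℓ + 1) (b)_{ℓ+1} / ((c)_{ℓ+1} (ℓ + 1)!) = (b / c) (b + 1)_ℓ /
((c + 1)_ℓ ℓ!)`.

All series converge absolutely: for every `r > 1`, `|(b)_ℓ| ≤ C r^ℓ |(c)_ℓ|` (the ratio
`|b + i| / |c + i|` tends to `1`), so the terms are dominated by
`C · multinomial(m) ∏ₖ (r² |xₖ|)^{mₖ}`, whose sum over `|m| = M` is `(r² ∑ₖ |xₖ|)^M`.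
-/

theorem ascPochhammer_succ_eval_left {R : Type*} [CommSemiring R] (n : ℕ) (a : R) :
    (ascPochhammer R (n + 1)).eval a = a * (ascPochhammer R n).eval (a + 1) := by
  simp [ascPochhammer_succ_left, Polynomial.eval_comp]

theorem ascPochhammer_eval_add_one_sub {R : Type*} [CommRing R] (a : R) (M : ℕ) :
    (ascPochhammer R M).eval (a + 1) - (ascPochhammer R M).eval a =
      M * (ascPochhammer R (M - 1)).eval (a + 1) := by
  cases M with
  | zero => simp
  | succ N =>
    rw [ascPochhammer_succ_eval, ascPochhammer_succ_eval_left, Nat.add_sub_cancel]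
    push_cast
    ring

theorem ascPochhammer_eval_ne_zero {R : Type*} [CommRing R] [IsDomain R] {b : R}
    (hb : ∀ l : ℕ, b ≠ -l) (m : ℕ) : (ascPochhammer R m).eval b ≠ 0 := by
  rw [Ne, ascPochhammer_eval_eq_zero_iff]
  rintro ⟨l, -, hl⟩
  exact hb l (by rw [hl, neg_neg])

theorem exists_abs_ascPochhammer_eval_le (a : ℝ) {b : ℝ} (hb : ∀ l : ℕ, b ≠ -l) {r : ℝ}
    (hr : 1 < r) :
    ∃ C, ∀ m, |(ascPochhammer ℝ m).eval a| ≤ C * r ^ m * |(ascPochhammer ℝ m).eval b| := by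
  obtain ⟨I, hI⟩ := exists_nat_ge ((|a| + r * |b|) / (r - 1))
  have hstep : ∀ i : ℕ, I ≤ i → |a + i| ≤ r * |b + i| := by
    intro i hi
    have hi' : |a| + r * |b| ≤ (r - 1) * i := by
      rw [div_le_iff₀ (by linarith)] at hI
      nlinarith [(Nat.cast_le (α := ℝ)).2 hi]
    calc |a + i| ≤ |a| + i := (abs_add_le _ _).trans_eq (by simp)
      _ ≤ r * (i - |b|) := by linarith
      _ ≤ r * |b + i| := by
        gcongr
        linarith [neg_abs_le b, le_abs_self (b + i)]
  set C := ∑ m ∈ range (I + 1),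
    |(ascPochhammer ℝ m).eval a| / (r ^ m * |(ascPochhammer ℝ m).eval b|)
  have hbase : ∀ m ≤ I,
      |(ascPochhammer ℝ m).eval a| ≤ C * r ^ m * |(ascPochhammer ℝ m).eval b| := by
    intro m hm
    have hpos : 0 < r ^ m * |(ascPochhammer ℝ m).eval b| :=
      mul_pos (by positivity) (abs_pos.2 (ascPochhammer_eval_ne_zero hb m))
    rw [mul_assoc, ← div_le_iff₀ hpos]
    exact single_le_sum (f := fun m => |(ascPochhammer ℝ m).eval a| /
      (r ^ m * |(ascPochhammer ℝ m).eval b|)) (fun _ _ => by positivity)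
      (mem_range.2 (Nat.lt_succ_of_le hm))
  refine ⟨C, fun m => ?_⟩
  rcases le_total m I with hm | hm
  · exact hbase m hm
  induction m, hm using Nat.le_induction with
  | base => exact hbase I le_rfl
  | succ m hm ih =>
    rw [ascPochhammer_succ_eval, ascPochhammer_succ_eval, abs_mul, abs_mul]
    calc |(ascPochhammer ℝ m).eval a| * |a + m|
        ≤ (C * r ^ m * |(ascPochhammer ℝ m).eval b|) * (r * |b + m|) :=
          mul_le_mul ih (hstep m hm) (abs_nonneg _) ((abs_nonneg _).trans ih)
      _ = C * r ^ (m + 1) * (|(ascPochhammer ℝ m).eval b| * |b + m|) := by ring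

theorem summable_multinomial_mul_prod_pow {ι : Type*} [Fintype ι] {w : ι → ℝ}
    (hw : ∀ i, 0 ≤ w i) (hw1 : ∑ i, w i < 1) :
    Summable fun m : ι → ℕ => (Nat.multinomial univ m : ℝ) * ∏ i, w i ^ m i := by
  classical
  refine summable_of_sum_le (c := ∑' M : ℕ, (∑ i, w i) ^ M)
    (fun m => mul_nonneg (Nat.cast_nonneg _) (prod_nonneg fun i _ => pow_nonneg (hw i) _))
    fun u => ?_
  have hw0 : 0 ≤ ∑ i, w i := sum_nonneg fun i _ => hw i
  set N := u.sup fun m => ∑ i, m i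
  calc ∑ m ∈ u, (Nat.multinomial univ m : ℝ) * ∏ i, w i ^ m i
      = ∑ M ∈ range (N + 1), ∑ m ∈ u with ∑ i, m i = M,
          (Nat.multinomial univ m : ℝ) * ∏ i, w i ^ m i :=
        (sum_fiberwise_of_maps_to (fun m hm => mem_range.2 (Nat.lt_succ_of_le
          (le_sup (f := fun m => ∑ i, m i) hm))) _).symm
    _ ≤ ∑ M ∈ range (N + 1), ∑ m ∈ piAntidiag univ M,
          (Nat.multinomial univ m : ℝ) * ∏ i, w i ^ m i := by
        refine sum_le_sum fun M _ =>
          sum_le_sum_of_subset_of_nonneg (fun m hm => ?_) fun m _ _ => ?_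
        · simpa [mem_piAntidiag] using (mem_filter.1 hm).2
        · exact mul_nonneg (Nat.cast_nonneg _) (prod_nonneg fun i _ => pow_nonneg (hw i) _)
    _ = ∑ M ∈ range (N + 1), (∑ i, w i) ^ M := by simp_rw [sum_pow_eq_sum_piAntidiag]
    _ ≤ ∑' M : ℕ, (∑ i, w i) ^ M :=
        Summable.sum_le_tsum _ (fun M _ => pow_nonneg hw0 M) (summable_geometric_of_lt_one hw0 hw1)

theorem factorial_sum_mul_prod_div_factorial {ι : Type*} [Fintype ι] (m : ι → ℕ) (w : ι → ℝ) :
    ((∑ i, m i).factorial : ℝ) * ∏ i, w i ^ m i / (m i).factorial =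
      Nat.multinomial univ m * ∏ i, w i ^ m i := by
  rw [← Nat.multinomial_spec, prod_div_distrib]
  push_cast
  field_simp

noncomputable def hypergeomCoeff (b c z : ℝ) (ℓ : ℕ) : ℝ :=
  (ascPochhammer ℝ ℓ).eval b * z ^ ℓ / ((ascPochhammer ℝ ℓ).eval c * (ℓ.factorial : ℝ))

noncomputable def lauricellaFATerm (n : ℕ) (a : ℝ) (b c z : Fin n → ℝ) (m : Fin n → ℕ) : ℝ :=
  (ascPochhammer ℝ (∑ k, m k)).eval a * ∏ k, hypergeomCoeff (b k) (c k) (z k) (m k)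

theorem lauricellaFA_eq_tsum (n : ℕ) (a : ℝ) (b c z : Fin n → ℝ) :
    lauricellaFA n a b c z = ∑' m, lauricellaFATerm n a b c z m := rfl

theorem abs_hypergeomCoeff_le {b c z C r : ℝ} {ℓ : ℕ}
    (hbc : |(ascPochhammer ℝ ℓ).eval b| ≤ C * r ^ ℓ * |(ascPochhammer ℝ ℓ).eval c|)
    (hc : (ascPochhammer ℝ ℓ).eval c ≠ 0) :
    |hypergeomCoeff b c z ℓ| ≤ C * ((r * |z|) ^ ℓ / ℓ.factorial) := by
  rw [hypergeomCoeff, abs_div, abs_mul, abs_mul, abs_pow, Nat.abs_cast,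
    div_le_iff₀ (by positivity)]
  calc |(ascPochhammer ℝ ℓ).eval b| * |z| ^ ℓ
      ≤ C * r ^ ℓ * |(ascPochhammer ℝ ℓ).eval c| * |z| ^ ℓ := by gcongr
    _ = C * ((r * |z|) ^ ℓ / ℓ.factorial) * (|(ascPochhammer ℝ ℓ).eval c| * ℓ.factorial) := by
      field_simp
      ring

theorem abs_lauricellaFATerm_le {n : ℕ} {a r C₀ : ℝ} {b c z C : Fin n → ℝ}
    (hc : ∀ k, ∀ l : ℕ, c k ≠ -l)
    (hC₀ : ∀ ℓ, |(ascPochhammer ℝ ℓ).eval a| ≤ C₀ * r ^ ℓ * ℓ.factorial)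
    (hC : ∀ k ℓ, |(ascPochhammer ℝ ℓ).eval (b k)| ≤ C k * r ^ ℓ * |(ascPochhammer ℝ ℓ).eval (c k)|)
    (m : Fin n → ℕ) :
    |lauricellaFATerm n a b c z m| ≤
      (C₀ * ∏ k, C k) * (Nat.multinomial univ m * ∏ k, (r * (r * |z k|)) ^ m k) := by
  have hshift : ∏ k, (r * (r * |z k|)) ^ m k / (m k).factorial =
      r ^ (∑ k, m k) * ∏ k, (r * |z k|) ^ m k / (m k).factorial := by
    rw [← prod_pow_eq_pow_sum, ← prod_mul_distrib]
    refine prod_congr rfl fun k _ => ?_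
    rw [mul_pow, mul_div_assoc]
  rw [lauricellaFATerm, abs_mul, abs_prod, ← factorial_sum_mul_prod_div_factorial, hshift]
  calc |(ascPochhammer ℝ (∑ k, m k)).eval a| * ∏ k, |hypergeomCoeff (b k) (c k) (z k) (m k)|
      ≤ (C₀ * r ^ (∑ k, m k) * (∑ k, m k).factorial) *
          ∏ k, C k * ((r * |z k|) ^ m k / (m k).factorial) :=
        mul_le_mul (hC₀ _) (prod_le_prod (fun _ _ => abs_nonneg _) fun k _ =>
          abs_hypergeomCoeff_le (hC k (m k)) (ascPochhammer_eval_ne_zero (hc k) (m k)))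
          (prod_nonneg fun _ _ => abs_nonneg _) ((abs_nonneg _).trans (hC₀ _))
    _ = _ := by
      rw [prod_mul_distrib]
      ring

theorem summable_lauricellaFATerm (n : ℕ) (a : ℝ) (b : Fin n → ℝ) {c : Fin n → ℝ}
    (hc : ∀ k, ∀ l : ℕ, c k ≠ -l) {z : Fin n → ℝ} (hz : ∑ k, |z k| < 1) :
    Summable (lauricellaFATerm n a b c z) := by
  set s := ∑ k, |z k|
  have hs : 0 ≤ s := sum_nonneg fun k _ => abs_nonneg _
  obtain ⟨r, hr, hrs⟩ : ∃ r : ℝ, 1 < r ∧ r * (r * s) < 1 :=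
    ⟨1 + (1 - s) / 4, by linarith, by
      nlinarith [mul_nonneg hs (sq_nonneg (1 - s)), mul_pos (sub_pos.2 hz) (sub_pos.2 hz)]⟩
  obtain ⟨C₀, hC₀⟩ := exists_abs_ascPochhammer_eval_le a (b := 1)
    (fun l h => by linarith [(Nat.cast_nonneg l : (0 : ℝ) ≤ l)]) hr
  simp only [ascPochhammer_eval_one, Nat.abs_cast] at hC₀
  choose C hC using fun k => exists_abs_ascPochhammer_eval_le (b k) (hc k) hr
  have hmajorant := (summable_multinomial_mul_prod_pow (w := fun k => r * (r * |z k|))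
    (fun k => by positivity) (by rw [← mul_sum, ← mul_sum]; exact hrs)).mul_left (C₀ * ∏ k, C k)
  exact hmajorant.of_norm_bounded fun m => abs_lauricellaFATerm_le hc hC₀ hC m

theorem succ_mul_hypergeomCoeff_succ (b c z : ℝ) (ℓ : ℕ) :
    (ℓ + 1) * hypergeomCoeff b c z (ℓ + 1) = b / c * z * hypergeomCoeff (b + 1) (c + 1) z ℓ := by
  rw [hypergeomCoeff, hypergeomCoeff, ascPochhammer_succ_eval_left, ascPochhammer_succ_eval_left,
    pow_succ, Nat.factorial_succ]
  push_cast
  rcases eq_or_ne c 0 with rfl | hc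
  · simp
  rcases eq_or_ne ((ascPochhammer ℝ ℓ).eval (c + 1)) 0 with h | h
  · simp [h]
  field_simp

theorem mem_range_add_single_one {ι : Type*} [DecidableEq ι] {j : ι} {m : ι → ℕ} (hm : m j ≠ 0) :
    m ∈ Set.range fun m' : ι → ℕ => m' + Pi.single j 1 := by
  refine ⟨Function.update m j (m j - 1), funext fun k => ?_⟩
  rcases eq_or_ne k j with rfl | hk
  · simp only [Pi.add_apply, Function.update_self, Pi.single_eq_same]
    omega
  · simp [Function.update_of_ne hk, Pi.single_eq_of_ne hk]

-- At `m = 0` the truncated `0 - 1 = 0` is harmless: this term only occurs multiplied by some `m j`.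
noncomputable def lauricellaFADiffTerm (n : ℕ) (a : ℝ) (b c z : Fin n → ℝ) (m : Fin n → ℕ) : ℝ :=
  (ascPochhammer ℝ (∑ k, m k - 1)).eval (a + 1) * ∏ k, hypergeomCoeff (b k) (c k) (z k) (m k)

theorem lauricellaFATerm_add_one_sub (n : ℕ) (a : ℝ) (b c z : Fin n → ℝ) (m : Fin n → ℕ) :
    lauricellaFATerm n (a + 1) b c z m - lauricellaFATerm n a b c z m =
      ∑ j, (m j : ℝ) * lauricellaFADiffTerm n a b c z m := by
  rw [lauricellaFATerm, lauricellaFATerm, lauricellaFADiffTerm, ← sub_mul,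
    ascPochhammer_eval_add_one_sub, ← sum_mul, Nat.cast_sum, mul_assoc]

theorem lauricellaFADiffTerm_add_single (n : ℕ) (a : ℝ) (b c z : Fin n → ℝ) (j : Fin n)
    (m : Fin n → ℕ) :
    ((m + Pi.single j 1 : Fin n → ℕ) j : ℝ) * lauricellaFADiffTerm n a b c z (m + Pi.single j 1) =
      b j / c j * z j * lauricellaFATerm n (a + 1) (Function.update b j (b j + 1))
        (Function.update c j (c j + 1)) z m := by
  have hsum : ∑ k, (m + Pi.single j 1 : Fin n → ℕ) k - 1 = ∑ k, m k := by
    simp [sum_add_distrib]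
  have htail : ∏ k ∈ {j}ᶜ, hypergeomCoeff (b k) (c k) (z k) ((m + Pi.single j 1 : Fin n → ℕ) k) =
      ∏ k ∈ {j}ᶜ, hypergeomCoeff (Function.update b j (b j + 1) k)
        (Function.update c j (c j + 1) k) (z k) (m k) := by
    refine prod_congr rfl fun k hk => ?_
    have hk : k ≠ j := by simpa using hk
    simp [Function.update_of_ne hk, Pi.single_eq_of_ne hk]
  rw [lauricellaFADiffTerm, lauricellaFATerm, hsum, Fintype.prod_eq_mul_prod_compl j,
    Fintype.prod_eq_mul_prod_compl j, htail]
  simp only [Pi.add_apply, Pi.single_eq_same, Function.update_self]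
  push_cast
  linear_combination ((ascPochhammer ℝ (∑ k, m k)).eval (a + 1) *
    ∏ k ∈ {j}ᶜ, hypergeomCoeff (Function.update b j (b j + 1) k)
        (Function.update c j (c j + 1) k) (z k) (m k)) *
      succ_mul_hypergeomCoeff_succ (b j) (c j) (z j) (m j)

theorem hasSum_mul_lauricellaFADiffTerm {n : ℕ} {a : ℝ} {b c z : Fin n → ℝ} (j : Fin n)
    (hS : Summable (lauricellaFATerm n (a + 1) (Function.update b j (b j + 1))
      (Function.update c j (c j + 1)) z)) :
    HasSum (fun m => (m j : ℝ) * lauricellaFADiffTerm n a b c z m)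
      (b j / c j * z j * lauricellaFA n (a + 1) (Function.update b j (b j + 1))
        (Function.update c j (c j + 1)) z) := by
  have hvanish : ∀ m ∉ Set.range fun m' : Fin n → ℕ => m' + Pi.single j 1,
      (m j : ℝ) * lauricellaFADiffTerm n a b c z m = 0 := fun m hm => by
    rw [not_imp_comm.1 mem_range_add_single_one hm, Nat.cast_zero, zero_mul]
  rw [← (add_left_injective (Pi.single j 1)).hasSum_iff hvanish, lauricellaFA_eq_tsum]
  simpa only [Function.comp_def, lauricellaFADiffTerm_add_single] using (hS.hasSum.mul_left _)

theorem update_add_one_ne_neg_natCast {ι : Type*} [DecidableEq ι] {c : ι → ℝ}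
    (hc : ∀ k, ∀ l : ℕ, c k ≠ -l) (j k : ι) (l : ℕ) : Function.update c j (c j + 1) k ≠ -l := by
  rcases eq_or_ne k j with rfl | hk
  · rw [Function.update_self]
    intro h
    exact hc k (l + 1) (by push_cast; linarith)
  · rw [Function.update_of_ne hk]
    exact hc k l

/-- Contiguous relation for the Lauricella function `F_A`. -/
theorem lauricellaFA_contiguous (n : ℕ) (a : ℝ) (aa bb : Fin n → ℝ)
    (hb : ∀ k, ∀ l : ℕ, bb k ≠ -(l : ℝ)) (x : Fin n → ℝ)
    (hx : ∑ k, |x k| < 1) :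
    (∑ j, aa j / bb j * x j *
        lauricellaFA n (a + 1) (Function.update aa j (aa j + 1))
          (Function.update bb j (bb j + 1)) x) =
      lauricellaFA n (a + 1) aa bb x - lauricellaFA n a aa bb x := by
  have hpieces := fun j => hasSum_mul_lauricellaFADiffTerm j
    (summable_lauricellaFATerm n (a + 1) (Function.update aa j (aa j + 1))
      (update_add_one_ne_neg_natCast hb j) hx)
  refine (hasSum_sum fun j _ => hpieces j).unique ?_
  simp_rw [← lauricellaFATerm_add_one_sub]
  exact (summable_lauricellaFATerm n (a + 1) aa hb hx).hasSum.sub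
    (summable_lauricellaFATerm n a aa hb hx).hasSum
end
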